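/- arXiv:1901.03656 — 4 statements merged into one kernel-verified Lean document; each statement's English description precedes it below -/
import Mathlib

section
/- (Centralized event-triggered formation control, Theorem 1.) Let G be a graph on n vertices with m edges (edge k joining i_k and j_k) with desired distances d_k > 0, let p : [0,∞) → (Fin n → ℝ^d) be differentiable, and let e(t) ∈ ℝ^m denote the distance error vector of p(t). Suppose there exist γ ∈ (0,1), λ > 0, and a function δ : [0,∞) → (Fin n → ℝ^d) such that for all t ≥ 0: (i) ṗ(t) = −R(p(t))ᵀ e(t) − δ(t); (ii) ‖δ(t)‖ ≤ γ ‖R(p(t))ᵀ e(t)‖; and (iii) ‖R(p(t))ᵀ e(t)‖² ≥ λ ‖e(t)‖². Then ‖e(t)‖ ≤ exp(−2(1−γ)λ t) · ‖e(0)‖ for all t ≥ 0; i.e. the distance errors converge to zero exponentially fast with rate at least κ = 2(1−γ)λ. -/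
/-!
Let `V = ‖e‖²`. Row `k` of `R(p)` is half the gradient of the squared length of edge `k`, so
`ė = 2 R(p) ṗ` and `V' = 2⟪e, ė⟫ = 4⟪R(p)ᵀe, ṗ⟫ = -4‖Rᵀe‖² - 4⟪Rᵀe, δ⟫`. Cauchy–Schwarz and the
trigger bound this by `-4(1-γ)‖Rᵀe‖² ≤ -4(1-γ)λ V`, and Grönwall's inequality for `V` gives the
exponential decay of `‖e‖ = √V` at rate `2(1-γ)λ`.
-/

open Finset Matrix Real
open scoped InnerProductSpace

theorem norm_le_exp_mul_of_inner_deriv_le {F : Type*} [NormedAddCommGroup F]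
    [InnerProductSpace ℝ F] {f f' : ℝ → F} {c : ℝ}
    (hf : ∀ t ≥ (0 : ℝ), HasDerivAt f (f' t) t)
    (hdecay : ∀ t ≥ (0 : ℝ), ⟪f t, f' t⟫_ℝ ≤ -c * ‖f t‖ ^ 2) :
    ∀ t ≥ (0 : ℝ), ‖f t‖ ≤ exp (-c * t) * ‖f 0‖ := by
  intro T hT
  have hsq : ‖f T‖ ^ 2 ≤ ‖f 0‖ ^ 2 * exp (-2 * c * T) := by
    have := le_gronwallBound_of_liminf_deriv_right_le (a := 0) (b := T) (K := -2 * c) (ε := 0)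
      (f := fun t => ‖f t‖ ^ 2) (f' := fun t => 2 * ⟪f t, f' t⟫_ℝ)
      (fun t ht => (hf t ht.1).norm_sq.continuousAt.continuousWithinAt)
      (fun t ht _ hr => (hf t ht.1).norm_sq.hasDerivWithinAt.liminf_right_slope_le hr)
      le_rfl (fun t ht => by linarith [hdecay t ht.1]) T ⟨hT, le_rfl⟩
    simpa [gronwallBound_ε0, mul_assoc] using this
  have hexp : exp (-2 * c * T) = exp (-c * T) ^ 2 := by rw [← exp_nat_mul]; ring_nf
  rw [← pow_le_pow_iff_left₀ (norm_nonneg _) (by positivity) two_ne_zero, mul_pow]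
  linarith [hexp ▸ hsq]

theorem real_inner_neg_sub_le {F : Type*} [NormedAddCommGroup F] [InnerProductSpace ℝ F]
    {a b : F} {γ : ℝ} (hb : ‖b‖ ≤ γ * ‖a‖) : ⟪a, -a - b⟫_ℝ ≤ -(1 - γ) * ‖a‖ ^ 2 := by
  have hab : -⟪a, b⟫_ℝ ≤ ‖a‖ * ‖b‖ := by simpa using real_inner_le_norm a (-b)
  rw [inner_sub_right, inner_neg_right, real_inner_self_eq_norm_sq]
  nlinarith [mul_le_mul_of_nonneg_left hb (norm_nonneg a)]

theorem real_inner_toLp_mulVec {ι κ : Type*} [Fintype ι] [Fintype κ] (x : EuclideanSpace ℝ ι)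
    (A : Matrix ι κ ℝ) (y : EuclideanSpace ℝ κ) :
    ⟪x, WithLp.toLp 2 (A *ᵥ y)⟫_ℝ = ⟪WithLp.toLp 2 (x ᵥ* A), y⟫_ℝ := by
  simp only [EuclideanSpace.inner_eq_star_dotProduct, star_trivial, dotProduct_comm _ x.ofLp,
    dotProduct_mulVec]
  exact dotProduct_comm _ _

section Rigidity

variable {V L E : Type*} [Fintype V] [Fintype L] [DecidableEq V] (ik jk : E → V)

def distanceError (dk : E → ℝ) (q : V × L → ℝ) : EuclideanSpace ℝ E :=
  WithLp.toLp 2 fun k => (∑ l, (q (ik k, l) - q (jk k, l)) ^ 2) - dk k ^ 2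

def rigidityMatrix (q : V × L → ℝ) : Matrix E (V × L) ℝ := fun k vl =>
  if vl.1 = ik k then q (ik k, vl.2) - q (jk k, vl.2)
  else if vl.1 = jk k then q (jk k, vl.2) - q (ik k, vl.2)
  else 0

theorem rigidityMatrix_mulVec_apply (q v : V × L → ℝ) (k : E) :
    (rigidityMatrix ik jk q *ᵥ v) k
      = ∑ l, (q (ik k, l) - q (jk k, l)) * (v (ik k, l) - v (jk k, l)) := by
  set D : L → ℝ := fun l => q (ik k, l) - q (jk k, l)
  -- also valid for a loop `ik k = jk k`, whose row vanishes
  have hentry : ∀ a l, rigidityMatrix ik jk q k (a, l)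
      = (if a = ik k then D l else 0) + (if a = jk k then -D l else 0) := by
    intro a l
    simp only [rigidityMatrix, D]
    split_ifs with hi hj hj <;> simp_all
  simp only [mulVec, dotProduct, Fintype.sum_prod_type_right, hentry, add_mul, ite_mul, zero_mul,
    sum_add_distrib, Fintype.sum_ite_eq']
  rw [← sum_add_distrib]
  exact sum_congr rfl fun l _ => by ring

theorem hasDerivAt_distanceError [Fintype E] (dk : E → ℝ) {p : ℝ → EuclideanSpace ℝ (V × L)}
    {v : EuclideanSpace ℝ (V × L)} {t : ℝ} (hp : HasDerivAt p v t) :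
    HasDerivAt (fun s => distanceError ik jk dk (p s))
      (WithLp.toLp 2 ((2 : ℝ) • (rigidityMatrix ik jk (p t) *ᵥ v)) : EuclideanSpace ℝ E) t := by
  have hcoord : ∀ x, HasDerivAt (fun s => p s x) (v x) t := fun x =>
    (PiLp.hasFDerivAt_apply 2 (p t) x).comp_hasDerivAt t hp
  have hedge : ∀ k, HasDerivAt (fun s => (∑ l, (p s (ik k, l) - p s (jk k, l)) ^ 2) - dk k ^ 2)
      (2 * (rigidityMatrix ik jk (p t) *ᵥ v) k) t := by
    intro k
    rw [rigidityMatrix_mulVec_apply, mul_sum]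
    refine (HasDerivAt.fun_sum fun l _ => ?_).sub_const _
    have hdiff := (hcoord (ik k, l)).fun_sub (hcoord (jk k, l))
    refine (hdiff.fun_pow 2).congr_deriv ?_
    norm_num
    ring
  refine ((PiLp.hasFDerivAt_toLp 2 _).comp_hasDerivAt t (hasDerivAt_pi.2 hedge)).congr_deriv ?_
  ext k
  simp

end Rigidity

theorem centralized_event_formation_exponential_general
    (d n m : ℕ) (ik jk : Fin m → Fin n)
    (dk : Fin m → ℝ)
    (p : ℝ → EuclideanSpace ℝ (Fin n × Fin d))
    (err : ℝ → EuclideanSpace ℝ (Fin m))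
    (herr : ∀ t k, err t k =
      (∑ l, (p t (ik k, l) - p t (jk k, l)) ^ 2) - (dk k) ^ 2)
    (R : ℝ → Matrix (Fin m) (Fin n × Fin d) ℝ)
    (hR : ∀ t, R t = fun k vl =>
      if vl.1 = ik k then p t (ik k, vl.2) - p t (jk k, vl.2)
      else if vl.1 = jk k then p t (jk k, vl.2) - p t (ik k, vl.2)
      else 0)
    (Rte : ℝ → EuclideanSpace ℝ (Fin n × Fin d))
    (hRte : ∀ t vl, Rte t vl = ∑ k, R t k vl * err t k)
    (γ lam : ℝ) (hγ1 : γ < 1)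
    (δ : ℝ → EuclideanSpace ℝ (Fin n × Fin d))
    (hdyn : ∀ t ≥ (0 : ℝ), HasDerivAt p (-(Rte t) - δ t) t)
    (htrig : ∀ t ≥ (0 : ℝ), ‖δ t‖ ≤ γ * ‖Rte t‖)
    (hlamb : ∀ t ≥ (0 : ℝ), lam * ‖err t‖ ^ 2 ≤ ‖Rte t‖ ^ 2) :
    ∀ t ≥ (0 : ℝ), ‖err t‖ ≤ Real.exp (-(2 * (1 - γ) * lam) * t) * ‖err 0‖ := by
  have herr_eq : err = fun t => distanceError ik jk dk (p t) := by
    funext t; ext k; exact herr t k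
  have hRte_eq : ∀ t, Rte t = WithLp.toLp 2 (err t ᵥ* R t) := by
    intro t; ext vl; simp only [hRte, vecMul, dotProduct, mul_comm]
  have hderiv : ∀ t ≥ (0 : ℝ), HasDerivAt err
      (WithLp.toLp 2 ((2 : ℝ) • (R t *ᵥ WithLp.ofLp (-(Rte t) - δ t))) : EuclideanSpace ℝ (Fin m))
      t := by
    intro t ht
    rw [herr_eq, hR t]
    exact hasDerivAt_distanceError ik jk dk (hdyn t ht)
  refine norm_le_exp_mul_of_inner_deriv_le hderiv fun t ht => ?_
  have hinner : ⟪err t, WithLp.toLp 2 ((2 : ℝ) • (R t *ᵥ WithLp.ofLp (-(Rte t) - δ t)))⟫_ℝ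
      = 2 * ⟪Rte t, -(Rte t) - δ t⟫_ℝ := by
    rw [WithLp.toLp_smul, real_inner_smul_right, real_inner_toLp_mulVec, ← hRte_eq]
  rw [hinner]
  linarith [real_inner_neg_sub_le (htrig t ht),
    mul_le_mul_of_nonneg_left (hlamb t ht) (sub_nonneg.2 hγ1.le)]

/-- **Theorem 1, centralized event-triggered formation control.**
If the position vector `p(t) ∈ ℝ^{dn}` evolves as `ṗ = −R(p)ᵀe − δ` with the
centralized event trigger guaranteeing `‖δ(t)‖ ≤ γ‖R(p(t))ᵀe(t)‖` for some
`γ ∈ (0,1)`, and `‖R(p(t))ᵀe(t)‖² ≥ λ‖e(t)‖²` for some `λ > 0`, then the distance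
error vector satisfies `‖e(t)‖ ≤ exp(−2(1−γ)λ t)‖e(0)‖` for all `t ≥ 0`. -/
theorem centralized_event_formation_exponential
    (d n m : ℕ) (ik jk : Fin m → Fin n)
    (dk : Fin m → ℝ) (hdk : ∀ k, 0 < dk k)
    (p : ℝ → EuclideanSpace ℝ (Fin n × Fin d))
    (err : ℝ → EuclideanSpace ℝ (Fin m))
    (herr : ∀ t k, err t k =
      (∑ l, (p t (ik k, l) - p t (jk k, l)) ^ 2) - (dk k) ^ 2)
    (R : ℝ → Matrix (Fin m) (Fin n × Fin d) ℝ)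
    (hR : ∀ t, R t = fun k vl =>
      if vl.1 = ik k then p t (ik k, vl.2) - p t (jk k, vl.2)
      else if vl.1 = jk k then p t (jk k, vl.2) - p t (ik k, vl.2)
      else 0)
    (Rte : ℝ → EuclideanSpace ℝ (Fin n × Fin d))
    (hRte : ∀ t vl, Rte t vl = ∑ k, R t k vl * err t k)
    (γ lam : ℝ) (hγ0 : 0 < γ) (hγ1 : γ < 1) (hlam : 0 < lam)
    (δ : ℝ → EuclideanSpace ℝ (Fin n × Fin d))
    (hdyn : ∀ t ≥ (0 : ℝ), HasDerivAt p (-(Rte t) - δ t) t)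
    (htrig : ∀ t ≥ (0 : ℝ), ‖δ t‖ ≤ γ * ‖Rte t‖)
    (hlamb : ∀ t ≥ (0 : ℝ), lam * ‖err t‖ ^ 2 ≤ ‖Rte t‖ ^ 2) :
    ∀ t ≥ (0 : ℝ), ‖err t‖ ≤ Real.exp (-(2 * (1 - γ) * lam) * t) * ‖err 0‖ :=
  centralized_event_formation_exponential_general d n m ik jk dk p err herr R hR Rte hRte γ lam hγ1
    δ hdyn htrig hlamb
end

section
/- (Core comparison estimate for the inter-event time lower bound, Theorem 2.) Let α > 0 and γ > 0, and set τ = γ/(α(1+γ)). Let T > 0 and let y : [0,T] → ℝ be differentiable with y(0) = 0, y(t) ≥ 0 for all t, and y′(t) ≤ α(1 + y(t))² for all t ∈ [0,T]. Then y(t) ≤ α t/(1 − α t) for all t ∈ [0, min(T, τ)], and in particular y(t) ≤ γ for all t ∈ [0, min(T, τ)]. Consequently, a quantity starting at 0 whose growth rate is bounded by α(1+y)² needs at least time τ = γ/(α(1+γ)) > 0 to reach the value γ. -/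
/-!
The function `F t = α t + 1 / (1 + y t)` has derivative `α - y' / (1 + y)² ≥ 0`, so it is
nondecreasing and `F t ≥ F 0 = 1`. Solving this for `y t` gives `y t ≤ α t / (1 - α t)`, the
solution of the comparison equation `φ' = α (1 + φ)²`, and that solution reaches `γ` exactly at
`t = γ / (α (1 + γ))`.
-/

open Set

theorem monotoneOn_mul_add_inv_one_add {y y' : ℝ → ℝ} {α a b : ℝ}
    (hderiv : ∀ t ∈ Icc a b, HasDerivAt y (y' t) t)
    (hpos : ∀ t ∈ Icc a b, 0 < 1 + y t)
    (hbound : ∀ t ∈ Icc a b, y' t ≤ α * (1 + y t) ^ 2) :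
    MonotoneOn (fun t => α * t + (1 + y t)⁻¹) (Icc a b) := by
  have hF : ∀ t ∈ Icc a b,
      HasDerivAt (fun t => α * t + (1 + y t)⁻¹) (α + -y' t / (1 + y t) ^ 2) t := fun t ht => by
    have h := ((hasDerivAt_id t).const_mul α).add (((hderiv t ht).const_add 1).inv (hpos t ht).ne')
    rwa [mul_one] at h
  refine monotoneOn_of_hasDerivWithinAt_nonneg (convex_Icc a b)
    (fun t ht => (hF t ht).continuousAt.continuousWithinAt)
    (fun t ht => (hF t (interior_subset ht)).hasDerivWithinAt) fun t ht => ?_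
  replace ht := interior_subset ht
  rw [neg_div, ← sub_eq_add_neg, sub_nonneg, div_le_iff₀ (pow_pos (hpos t ht) 2)]
  exact hbound t ht

theorem le_mul_div_one_sub_mul_of_deriv_le {y y' : ℝ → ℝ} {α T t : ℝ}
    (hderiv : ∀ s ∈ Icc 0 T, HasDerivAt y (y' s) s) (hy0 : y 0 = 0)
    (hnonneg : ∀ s ∈ Icc 0 T, 0 ≤ y s) (hbound : ∀ s ∈ Icc 0 T, y' s ≤ α * (1 + y s) ^ 2)
    (ht : t ∈ Icc 0 T) (hαt : α * t < 1) :
    y t ≤ α * t / (1 - α * t) := by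
  have hpos : ∀ s ∈ Icc 0 T, 0 < 1 + y s := fun s hs => by linarith [hnonneg s hs]
  have hF : 1 ≤ α * t + (1 + y t)⁻¹ := by
    simpa [hy0] using monotoneOn_mul_add_inv_one_add hderiv hpos hbound
      (left_mem_Icc.2 (ht.1.trans ht.2)) ht ht.1
  have hinv : 1 + y t ≤ (1 - α * t)⁻¹ :=
    (le_inv_comm₀ (sub_pos.2 hαt) (hpos t ht)).1 (by linarith)
  rw [le_div_iff₀ (sub_pos.2 hαt)]
  have hprod := (le_div_iff₀ (sub_pos.2 hαt)).1 (one_div (1 - α * t) ▸ hinv)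
  linarith

theorem lt_one_of_le_div_one_add {s γ : ℝ} (hγ : 0 ≤ γ) (hs : s ≤ γ / (1 + γ)) : s < 1 :=
  hs.trans_lt <| (div_lt_one (by linarith)).2 (by linarith)

theorem div_one_sub_le_of_le_div_one_add {s γ : ℝ} (hγ : 0 ≤ γ) (hs : s ≤ γ / (1 + γ)) :
    s / (1 - s) ≤ γ := by
  rw [div_le_iff₀ (sub_pos.2 (lt_one_of_le_div_one_add hγ hs))]
  rw [le_div_iff₀ (by linarith)] at hs
  linarith

theorem inter_event_comparison_general (α γ T : ℝ) (hα : 0 < α) (hγ : 0 < γ)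
    (τ : ℝ) (hτ : τ = γ / (α * (1 + γ)))
    (y y' : ℝ → ℝ)
    (hderiv : ∀ t ∈ Set.Icc (0 : ℝ) T, HasDerivAt y (y' t) t)
    (hy0 : y 0 = 0)
    (hnonneg : ∀ t ∈ Set.Icc (0 : ℝ) T, 0 ≤ y t)
    (hbound : ∀ t ∈ Set.Icc (0 : ℝ) T, y' t ≤ α * (1 + y t) ^ 2) :
    ∀ t ∈ Set.Icc (0 : ℝ) (min T τ), y t ≤ α * t / (1 - α * t) ∧ y t ≤ γ := by
  rintro t ⟨ht0, ht⟩
  have htT : t ∈ Icc 0 T := ⟨ht0, ht.trans (min_le_left _ _)⟩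
  have hαt : α * t ≤ γ / (1 + γ) := calc
    α * t ≤ α * τ := mul_le_mul_of_nonneg_left (ht.trans (min_le_right _ _)) hα.le
    _ = γ / (1 + γ) := by rw [hτ]; field_simp
  have hy := le_mul_div_one_sub_mul_of_deriv_le hderiv hy0 hnonneg hbound htT
    (lt_one_of_le_div_one_add hγ.le hαt)
  exact ⟨hy, hy.trans (div_one_sub_le_of_le_div_one_add hγ.le hαt)⟩

/-- **core comparison estimate for the inter-event time, Theorem 2.**
If `y(0) = 0`, `y ≥ 0`, and `y′(t) ≤ α(1 + y(t))²` on `[0, T]`, with `α, γ > 0` and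
`τ = γ/(α(1+γ))`, then `y(t) ≤ αt/(1 − αt)` and `y(t) ≤ γ` for all
`t ∈ [0, min T τ]`: the ratio `y` needs at least time `τ > 0` to grow from `0` to `γ`. -/
theorem inter_event_comparison (α γ T : ℝ) (hα : 0 < α) (hγ : 0 < γ) (hT : 0 < T)
    (τ : ℝ) (hτ : τ = γ / (α * (1 + γ)))
    (y y' : ℝ → ℝ)
    (hderiv : ∀ t ∈ Set.Icc (0 : ℝ) T, HasDerivAt y (y' t) t)
    (hy0 : y 0 = 0)
    (hnonneg : ∀ t ∈ Set.Icc (0 : ℝ) T, 0 ≤ y t)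
    (hbound : ∀ t ∈ Set.Icc (0 : ℝ) T, y' t ≤ α * (1 + y t) ^ 2) :
    ∀ t ∈ Set.Icc (0 : ℝ) (min T τ), y t ≤ α * t / (1 - α * t) ∧ y t ≤ γ :=
  inter_event_comparison_general α γ T hα hγ τ hτ y y' hderiv hy0 hnonneg hbound
end

section
/- (Distributed event-triggered formation control, Theorem 3.) Let G be a graph on n vertices with m edges with desired distances d_k > 0, let p : [0,∞) → (Fin n → ℝ^d) be differentiable, let e(t) ∈ ℝ^m denote the distance error vector of p(t), and for each agent i let w_i(t) := (R(p(t))ᵀ e(t))_i ∈ ℝ^d denote the i-th d-dimensional block of R(p(t))ᵀe(t). Suppose there exist constants a_i ∈ (0,1), γ_i ∈ (0,1) for i = 1,…,n, a constant λ > 0, and functions δ_i : [0,∞) → ℝ^d such that for all t ≥ 0 and all i: (i) ṗ_i(t) = −w_i(t) − δ_i(t); (ii) ‖δ_i(t)‖² ≤ γ_i a_i (2 − a_i) ‖w_i(t)‖²; and (iii) ∑_{i=1}^n ‖w_i(t)‖² ≥ λ‖e(t)‖². Then ‖e(t)‖ ≤ exp(−2ζλ t)·‖e(0)‖ for all t ≥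 0, where ζ = min_i (1 − γ_i)(2 − a_i)/2; i.e. the distance errors converge to zero exponentially fast. -/
/-!
`V = ‖e‖²` is a Lyapunov function. Since `ė = 2 R(p) ṗ` and `R(p)ᵀ` is the adjoint of `R(p)`,
`V̇ = 4 ⟪R(p)ᵀ e, ṗ⟫ = 4 ∑ᵢ ⟪wᵢ, -wᵢ - δᵢ⟫`. Young's inequality with weight `aᵢ` together with the
trigger condition bounds each summand by `-ζ ‖wᵢ‖²`, so `V̇ ≤ -4ζ ∑ᵢ ‖wᵢ‖² ≤ -4ζλ V`, and Grönwall
gives `V(t) ≤ exp(-4ζλt) V(0)`; taking square roots halves the rate.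
-/

open Finset Real
open scoped InnerProductSpace

section Rigidity

variable {ι κ E : Type*} [Fintype ι] [Fintype κ] [NormedAddCommGroup E] [InnerProductSpace ℝ E]

def edgeError (ik jk : κ → ι) (dk : κ → ℝ) (x : ι → E) (k : κ) : ℝ :=
  ‖x (ik k) - x (jk k)‖ ^ 2 - dk k ^ 2

/-- `(R(x)ᵀ e)_i`, the `i`-th block of the transposed rigidity matrix applied to `e`. -/
def rigidityTransposeMul [DecidableEq ι] (ik jk : κ → ι) (x : ι → E) (e : κ → ℝ) (i : ι) : E :=
  ∑ k, ((if i = ik k then e k • (x (ik k) - x (jk k)) else 0) +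
    (if i = jk k then e k • (x (jk k) - x (ik k)) else 0))

theorem sum_inner_rigidityTransposeMul [DecidableEq ι] (ik jk : κ → ι) (x q : ι → E)
    (e : κ → ℝ) :
    ∑ i, ⟪rigidityTransposeMul ik jk x e i, q i⟫_ℝ =
      ∑ k, e k * ⟪x (ik k) - x (jk k), q (ik k) - q (jk k)⟫_ℝ := by
  have hsingle (j : ι) (y : E) : ∑ i, ⟪if i = j then y else 0, q i⟫_ℝ = ⟪y, q j⟫_ℝ := by
    rw [Finset.sum_eq_single j] <;> simp_all
  simp only [rigidityTransposeMul, sum_inner, inner_add_left]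
  rw [Finset.sum_comm]
  refine Finset.sum_congr rfl fun k _ => ?_
  rw [sum_add_distrib, hsingle, hsingle, real_inner_smul_left, real_inner_smul_left,
    ← neg_sub (x (ik k)), inner_neg_left, inner_sub_right]
  ring

theorem hasDerivAt_sum_edgeError_sq [DecidableEq ι] (ik jk : κ → ι) (dk : κ → ℝ)
    {x : ℝ → ι → E} {v : ι → E} {t : ℝ} (hx : ∀ i, HasDerivAt (x · i) (v i) t) :
    HasDerivAt (fun s => ∑ k, edgeError ik jk dk (x s) k ^ 2)
      (4 * ∑ i, ⟪rigidityTransposeMul ik jk (x t) (edgeError ik jk dk (x t)) i, v i⟫_ℝ) t := by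
  rw [sum_inner_rigidityTransposeMul, Finset.mul_sum]
  refine HasDerivAt.fun_sum fun k _ => ?_
  have hedge : HasDerivAt (fun s => edgeError ik jk dk (x s) k)
      (2 * ⟪x t (ik k) - x t (jk k), v (ik k) - v (jk k)⟫_ℝ) t :=
    ((hx (ik k)).fun_sub (hx (jk k))).norm_sq.sub_const _
  refine (hedge.fun_pow 2).congr_deriv ?_
  norm_num
  ring

end Rigidity

theorem inner_neg_sub_le_of_norm_sq_le {E : Type*} [NormedAddCommGroup E]
    [InnerProductSpace ℝ E] {w δ : E} {a γ : ℝ} (ha : 0 < a)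
    (hδ : ‖δ‖ ^ 2 ≤ γ * a * (2 - a) * ‖w‖ ^ 2) :
    ⟪w, -w - δ⟫_ℝ ≤ -((1 - γ) * (2 - a) / 2 * ‖w‖ ^ 2) := by
  have hcs : -⟪w, δ⟫_ℝ ≤ ‖w‖ * ‖δ‖ := (neg_le_abs _).trans (abs_real_inner_le_norm _ _)
  have hyoung : 2 * a * (‖w‖ * ‖δ‖) ≤ a ^ 2 * ‖w‖ ^ 2 + ‖δ‖ ^ 2 := by
    nlinarith [sq_nonneg (a * ‖w‖ - ‖δ‖)]
  rw [inner_sub_right, inner_neg_right, real_inner_self_eq_norm_sq]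
  nlinarith

theorem le_mul_exp_of_hasDerivAt_le_mul {V V' : ℝ → ℝ} {K : ℝ}
    (hV : ∀ t ≥ 0, HasDerivAt V (V' t) t) (hbound : ∀ t ≥ 0, V' t ≤ K * V t)
    {t : ℝ} (ht : 0 ≤ t) : V t ≤ V 0 * exp (K * t) := by
  have h := le_gronwallBound_of_liminf_deriv_right_le (f := V) (f' := V') (ε := 0)
    (a := 0) (b := t)
    (fun s hs => (hV s hs.1).continuousAt.continuousWithinAt)
    (fun s hs _ hr => (hV s hs.1).hasDerivWithinAt.liminf_right_slope_le hr) le_rfl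
    (fun s hs => by simpa using hbound s hs.1) t ⟨ht, le_rfl⟩
  rwa [sub_zero, gronwallBound_ε0] at h

theorem distributed_event_formation_exponential_general
    (d n m : ℕ) [NeZero n] (ik jk : Fin m → Fin n)
    (dk : Fin m → ℝ)
    (p : ℝ → Fin n → EuclideanSpace ℝ (Fin d))
    (err : ℝ → EuclideanSpace ℝ (Fin m))
    (herr : ∀ t k, err t k = ‖p t (ik k) - p t (jk k)‖ ^ 2 - (dk k) ^ 2)
    (w : ℝ → Fin n → EuclideanSpace ℝ (Fin d))
    (hw : ∀ t i, w t i = ∑ k,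
      ((if i = ik k then err t k • (p t (ik k) - p t (jk k)) else 0) +
       (if i = jk k then err t k • (p t (jk k) - p t (ik k)) else 0)))
    (a γ : Fin n → ℝ) (ha : ∀ i, 0 < a i ∧ a i < 1) (hγ : ∀ i, 0 < γ i ∧ γ i < 1)
    (lam : ℝ)
    (δ : ℝ → Fin n → EuclideanSpace ℝ (Fin d))
    (hdyn : ∀ t ≥ (0 : ℝ), ∀ i, HasDerivAt (fun s => p s i) (-(w t i) - δ t i) t)
    (htrig : ∀ t ≥ (0 : ℝ), ∀ i,
      ‖δ t i‖ ^ 2 ≤ γ i * a i * (2 - a i) * ‖w t i‖ ^ 2)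
    (hlamb : ∀ t ≥ (0 : ℝ), lam * ‖err t‖ ^ 2 ≤ ∑ i, ‖w t i‖ ^ 2)
    (ζ : ℝ)
    (hζ : ζ = Finset.univ.inf' Finset.univ_nonempty
      (fun i => (1 - γ i) * (2 - a i) / 2)) :
    ∀ t ≥ (0 : ℝ), ‖err t‖ ≤ Real.exp (-(2 * ζ * lam) * t) * ‖err 0‖ := by
  intro t ht
  have herr' : ∀ s, ⇑(err s) = edgeError ik jk dk (p s) := fun s => funext (herr s)
  have hV : (fun s => ‖err s‖ ^ 2) = fun s => ∑ k, edgeError ik jk dk (p s) k ^ 2 := by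
    simp only [EuclideanSpace.real_norm_sq_eq, herr']
  have hW : ∀ s, rigidityTransposeMul ik jk (p s) (edgeError ik jk dk (p s)) = w s :=
    fun s => funext fun i => by rw [hw, herr']; rfl
  have hζle : ∀ i, ζ ≤ (1 - γ i) * (2 - a i) / 2 := fun i => hζ ▸ inf'_le _ (mem_univ i)
  have hζ0 : 0 ≤ ζ := hζ ▸ le_inf' _ _ fun i _ => by
    nlinarith [(ha i).2, (hγ i).2]
  have hderiv : ∀ s ≥ 0, HasDerivAt (fun s => ‖err s‖ ^ 2)
      (4 * ∑ i, ⟪w s i, -(w s i) - δ s i⟫_ℝ) s := fun s hs => by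
    simpa only [hV, hW] using hasDerivAt_sum_edgeError_sq ik jk dk (hdyn s hs)
  have hdecay : ∀ s ≥ 0, 4 * ∑ i, ⟪w s i, -(w s i) - δ s i⟫_ℝ ≤ -(4 * ζ * lam) * ‖err s‖ ^ 2 :=
    fun s hs => by
      have hterm : ∀ i, ⟪w s i, -(w s i) - δ s i⟫_ℝ ≤ -(ζ * ‖w s i‖ ^ 2) := fun i =>
        (inner_neg_sub_le_of_norm_sq_le (ha i).1 (htrig s hs i)).trans <|
          neg_le_neg (mul_le_mul_of_nonneg_right (hζle i) (sq_nonneg _))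
      have hsum := Finset.sum_le_sum fun i (_ : i ∈ univ) => hterm i
      rw [sum_neg_distrib, ← mul_sum] at hsum
      nlinarith [mul_le_mul_of_nonneg_left (hlamb s hs) hζ0]
  have hsq := le_mul_exp_of_hasDerivAt_le_mul hderiv hdecay ht
  have hrate : (exp (-(2 * ζ * lam) * t) * ‖err 0‖) ^ 2 =
      ‖err 0‖ ^ 2 * exp (-(4 * ζ * lam) * t) := by
    rw [mul_pow, ← exp_nat_mul]
    ring_nf
  rw [← pow_le_pow_iff_left₀ (norm_nonneg _) (by positivity) two_ne_zero, hrate]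
  exact hsq

/-- **Theorem 3, distributed event-triggered formation control.**
Each agent `i` moves as `ṗ_i = −w_i − δ_i`, where `w_i = (R(p)ᵀe)_i =
∑_{j ∈ N_i} e_{ij}(p_i − p_j)` is the `i`-th `d`-dimensional block of `R(p)ᵀe`.
If the distributed event trigger guarantees `‖δ_i(t)‖² ≤ γ_i a_i (2−a_i)‖w_i(t)‖²`
with `a_i, γ_i ∈ (0,1)`, and `∑_i ‖w_i(t)‖² ≥ λ‖e(t)‖²` with `λ > 0`, then
`‖e(t)‖ ≤ exp(−2ζλ t)‖e(0)‖` where `ζ = min_i (1−γ_i)(2−a_i)/2`. -/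
theorem distributed_event_formation_exponential
    (d n m : ℕ) [NeZero n] (ik jk : Fin m → Fin n)
    (dk : Fin m → ℝ) (hdk : ∀ k, 0 < dk k)
    (p : ℝ → Fin n → EuclideanSpace ℝ (Fin d))
    (err : ℝ → EuclideanSpace ℝ (Fin m))
    (herr : ∀ t k, err t k = ‖p t (ik k) - p t (jk k)‖ ^ 2 - (dk k) ^ 2)
    (w : ℝ → Fin n → EuclideanSpace ℝ (Fin d))
    (hw : ∀ t i, w t i = ∑ k,
      ((if i = ik k then err t k • (p t (ik k) - p t (jk k)) else 0) +
       (if i = jk k then err t k • (p t (jk k) - p t (ik k)) else 0)))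
    (a γ : Fin n → ℝ) (ha : ∀ i, 0 < a i ∧ a i < 1) (hγ : ∀ i, 0 < γ i ∧ γ i < 1)
    (lam : ℝ) (hlam : 0 < lam)
    (δ : ℝ → Fin n → EuclideanSpace ℝ (Fin d))
    (hdyn : ∀ t ≥ (0 : ℝ), ∀ i, HasDerivAt (fun s => p s i) (-(w t i) - δ t i) t)
    (htrig : ∀ t ≥ (0 : ℝ), ∀ i,
      ‖δ t i‖ ^ 2 ≤ γ i * a i * (2 - a i) * ‖w t i‖ ^ 2)
    (hlamb : ∀ t ≥ (0 : ℝ), lam * ‖err t‖ ^ 2 ≤ ∑ i, ‖w t i‖ ^ 2)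
    (ζ : ℝ)
    (hζ : ζ = Finset.univ.inf' Finset.univ_nonempty
      (fun i => (1 - γ i) * (2 - a i) / 2)) :
    ∀ t ≥ (0 : ℝ), ‖err t‖ ≤ Real.exp (-(2 * ζ * lam) * t) * ‖err 0‖ :=
  distributed_event_formation_exponential_general d n m ik jk dk p err herr w hw a γ ha hγ lam δ
    hdyn htrig hlamb ζ hζ
end

section
/- (Zeno-free inter-event bound for the modified event function.) Let α > 0, b ≥ 0, v > 0, θ > 0 and t₀ ≥ 0. Then: (i) there exists a unique τ > 0 such that α·τ = √(b + v·exp(−θ(t₀ + τ))); and (ii) for this τ, if g : [t₀, ∞) → ℝ satisfies g(t₀) = 0 and |g(t) − g(s)| ≤ α|t − s| for all t, s ≥ t₀ (i.e. g is α-Lipschitz), then g(t)² ≤ b + v·exp(−θ t) for all t ∈ [t₀, t₀ + τ]. Hence the next violation of the threshold condition cannot occur before time t₀ + τ, with τ > 0. -/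
open Real Set

/-- `τ ↦ α τ - φ τ` is strictly increasing, negative at `0` and nonnegative at `φ 0 / α`
because `φ ≤ φ 0` on `[0, ∞)`; the intermediate value theorem gives the root. -/
theorem existsUnique_pos_mul_eq_of_antitone {α : ℝ} (hα : 0 < α) {φ : ℝ → ℝ}
    (hφ : Continuous φ) (hanti : Antitone φ) (hφ0 : 0 < φ 0) :
    ∃! τ : ℝ, 0 < τ ∧ α * τ = φ τ := by
  set f : ℝ → ℝ := fun τ => α * τ - φ τ with hf
  have hmono : StrictMono f := fun s t hst => by
    have := hanti hst.le
    simp only [hf]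
    nlinarith
  have hM : 0 ≤ φ 0 / α := by positivity
  have hfM : 0 ≤ f (φ 0 / α) := by
    have := hanti hM
    simp only [hf, mul_div_cancel₀ _ hα.ne']
    linarith
  have hf0 : f 0 < 0 := by simp [hf, hφ0]
  obtain ⟨τ, hτ, hfτ⟩ : ∃ τ ∈ Icc 0 (φ 0 / α), f τ = 0 :=
    intermediate_value_Icc hM (by fun_prop) ⟨hf0.le, hfM⟩
  have hτpos : 0 < τ := hτ.1.lt_of_ne (by rintro rfl; exact hf0.ne hfτ)
  exact ⟨τ, ⟨hτpos, sub_eq_zero.1 hfτ⟩,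
    fun σ ⟨_, hσ⟩ => hmono.injective ((sub_eq_zero.2 hσ).trans hfτ.symm)⟩

theorem antitone_add_mul_exp_neg_mul (b : ℝ) {v θ : ℝ} (hv : 0 ≤ v) (hθ : 0 ≤ θ) :
    Antitone fun t => b + v * exp (-θ * t) := fun s t hst => by
  dsimp only
  gcongr _ + _ * exp ?_
  nlinarith

theorem sq_le_sq_mul_of_abs_sub_le {g : ℝ → ℝ} {α t₀ t τ : ℝ} (hα : 0 ≤ α) (hg : g t₀ = 0)
    (hlip : |g t - g t₀| ≤ α * |t - t₀|) (ht : t ∈ Icc t₀ (t₀ + τ)) :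
    g t ^ 2 ≤ (α * τ) ^ 2 := by
  rw [hg, sub_zero, abs_of_nonneg (sub_nonneg.2 ht.1)] at hlip
  have : |g t| ≤ α * τ := hlip.trans (by gcongr; linarith [ht.2])
  simpa only [sq_abs] using pow_le_pow_left₀ (abs_nonneg _) this 2

theorem zeno_free_inter_event_bound_general (α b v θ t₀ : ℝ)
    (hα : 0 < α) (hb : 0 ≤ b) (hv : 0 < v) (hθ : 0 < θ) :
    (∃! τ : ℝ, 0 < τ ∧
      α * τ = Real.sqrt (b + v * Real.exp (-θ * (t₀ + τ)))) ∧
    (∀ τ : ℝ,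
      (0 < τ ∧ α * τ = Real.sqrt (b + v * Real.exp (-θ * (t₀ + τ)))) →
      ∀ g : ℝ → ℝ, g t₀ = 0 →
        (∀ t s, t₀ ≤ t → t₀ ≤ s → |g t - g s| ≤ α * |t - s|) →
        ∀ t ∈ Set.Icc t₀ (t₀ + τ), (g t) ^ 2 ≤ b + v * Real.exp (-θ * t)) := by
  have hanti := antitone_add_mul_exp_neg_mul b hv.le hθ.le
  refine ⟨existsUnique_pos_mul_eq_of_antitone hα (by fun_prop)
    (fun s t hst => sqrt_le_sqrt (hanti (by linarith))) (sqrt_pos.2 (by positivity)), ?_⟩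
  rintro τ ⟨-, hτ⟩ g hg hlip t ht
  calc g t ^ 2 ≤ (α * τ) ^ 2 := sq_le_sq_mul_of_abs_sub_le hα.le hg (hlip t t₀ ht.1 le_rfl) ht
    _ = b + v * exp (-θ * (t₀ + τ)) := by rw [hτ, sq_sqrt (by positivity)]
    _ ≤ b + v * exp (-θ * t) := hanti ht.2

/-- **Zeno-free inter-event bound for the modified event function.**
For `α > 0`, `b ≥ 0`, `v > 0`, `θ > 0`, `t₀ ≥ 0`:
(i) there is a unique `τ > 0` with `ατ = √(b + v·exp(−θ(t₀+τ)))`; and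
(ii) for this `τ`, any `α`-Lipschitz function `g` on `[t₀,∞)` with `g(t₀) = 0`
satisfies `g(t)² ≤ b + v·exp(−θt)` for all `t ∈ [t₀, t₀+τ]`, so the threshold cannot
be violated before time `t₀ + τ`. -/
theorem zeno_free_inter_event_bound (α b v θ t₀ : ℝ)
    (hα : 0 < α) (hb : 0 ≤ b) (hv : 0 < v) (hθ : 0 < θ) (ht₀ : 0 ≤ t₀) :
    (∃! τ : ℝ, 0 < τ ∧
      α * τ = Real.sqrt (b + v * Real.exp (-θ * (t₀ + τ)))) ∧
    (∀ τ : ℝ,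
      (0 < τ ∧ α * τ = Real.sqrt (b + v * Real.exp (-θ * (t₀ + τ)))) →
      ∀ g : ℝ → ℝ, g t₀ = 0 →
        (∀ t s, t₀ ≤ t → t₀ ≤ s → |g t - g s| ≤ α * |t - s|) →
        ∀ t ∈ Set.Icc t₀ (t₀ + τ), (g t) ^ 2 ≤ b + v * Real.exp (-θ * t)) :=
  zeno_free_inter_event_bound_general α b v θ t₀ hα hb hv hθ
end
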